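/- Let (A, ·) be an associative superalgebra over a field of characteristic zero and let R : A → A be a Rota-Baxter operator of weight −1 on A. Define x ∘ y := R(x)y − (−1)^{|x||y|} y R(x) − xy for homogeneous x, y ∈ A. Then (A, ∘) is a pre-Lie superalgebra. -/
import Mathlib


/-- The super sign `(−1)^{|x||y|}` for parities `i`, `j`. -/
def sgn (K : Type*) [Field K] (i j : ZMod 2) : K := (-1 : K) ^ (i.val * j.val)

/-- The product `x ∘ y = R(x)y − (−1)^{|x||y|} y R(x) − xy` on homogeneous elements of
parities `i`, `j`. -/
def circOp {K A : Type*} [Field K] [AddCommGroup A] [Module K A]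
    (mul : A →ₗ[K] A →ₗ[K] A) (R : A →ₗ[K] A) (i j : ZMod 2) (x y : A) : A :=
  mul (R x) y - sgn K i j • mul y (R x) - mul x y

set_option maxHeartbeats 2000000

/-- if `R` is a Rota-Baxter operator of weight `−1` on an associative
superalgebra `(A,·)`, then `x ∘ y := R(x)y − (−1)^{|x||y|} y R(x) − xy` makes `(A,∘)`
a pre-Lie superalgebra. -/
theorem stmt10 {K A : Type*} [Field K] [CharZero K] [AddCommGroup A] [Module K A]
    (𝒜 : ZMod 2 → Submodule K A) (hgr : DirectSum.IsInternal 𝒜)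
    (mul : A →ₗ[K] A →ₗ[K] A)
    (hmul_even : ∀ (i j : ZMod 2), ∀ x ∈ 𝒜 i, ∀ y ∈ 𝒜 j, mul x y ∈ 𝒜 (i + j))
    (hassoc : ∀ (i j k : ZMod 2), ∀ x ∈ 𝒜 i, ∀ y ∈ 𝒜 j, ∀ z ∈ 𝒜 k,
      mul (mul x y) z = mul x (mul y z))
    (R : A →ₗ[K] A) (hR : ∀ (i : ZMod 2), ∀ x ∈ 𝒜 i, R x ∈ 𝒜 i)
    (hRB : ∀ (i j : ZMod 2), ∀ x ∈ 𝒜 i, ∀ y ∈ 𝒜 j,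
      mul (R x) (R y) = R (mul (R x) y + mul x (R y) + (-1 : K) • mul x y)) :
    -- ∘ is even
    (∀ (i j : ZMod 2), ∀ x ∈ 𝒜 i, ∀ y ∈ 𝒜 j, circOp mul R i j x y ∈ 𝒜 (i + j)) ∧
    -- pre-Lie super-identity for ∘
    (∀ (i j k : ZMod 2), ∀ x ∈ 𝒜 i, ∀ y ∈ 𝒜 j, ∀ z ∈ 𝒜 k,
      circOp mul R (i + j) k (circOp mul R i j x y) z
          - circOp mul R i (j + k) x (circOp mul R j k y z)
        = sgn K i j • (circOp mul R (i + j) k (circOp mul R j i y x) z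
            - circOp mul R j (i + k) y (circOp mul R i k x z))) := by
  have hred : ∀ (i j : ZMod 2), ∀ x ∈ 𝒜 i, ∀ y ∈ 𝒜 j,
      R (mul (R x) y) = mul (R x) (R y) - R (mul x (R y)) + R (mul x y) := by
    intro i j x hx y hy
    rw [hRB i j x hx y hy, map_add, map_add, map_smul]
    module
  constructor
  · intro i j x hx y hy
    exact Submodule.sub_mem _
      (Submodule.sub_mem _ (hmul_even i j (R x) (hR i x hx) y hy)
        (Submodule.smul_mem _ _ (add_comm j i ▸ hmul_even j i y hy (R x) (hR i x hx))))
      (hmul_even i j x hx y hy)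
  · intro i j k x hx y hy z hz
    have hRx := hR i x hx
    have hRy := hR j y hy
    have h2 : ∀ m : ZMod 2, m = 0 ∨ m = 1 := by decide
    rcases h2 i with rfl | rfl <;> rcases h2 j with rfl | rfl <;> rcases h2 k with rfl | rfl <;>
    · simp only [circOp, map_sub, map_smul, map_add, LinearMap.sub_apply,
        LinearMap.smul_apply, LinearMap.add_apply, smul_sub, smul_add, smul_smul]
      rw [hred _ _ x hx y hy, hred _ _ y hy x hx]
      try simp only [map_sub, map_smul, map_add, LinearMap.sub_apply,
        LinearMap.smul_apply, LinearMap.add_apply, smul_sub, smul_add, smul_smul]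
      simp only [hassoc _ _ _ _ hRx _ hRy _ hz, hassoc _ _ _ _ hRx _ hy _ hz,
        hassoc _ _ _ _ hy _ hRx _ hz, hassoc _ _ _ _ hx _ hy _ hz,
        hassoc _ _ _ _ hRy _ hz _ hRx, hassoc _ _ _ _ hz _ hRy _ hRx,
        hassoc _ _ _ _ hy _ hz _ hRx, hassoc _ _ _ _ hRy _ hRx _ hz,
        hassoc _ _ _ _ hRy _ hx _ hz, hassoc _ _ _ _ hx _ hRy _ hz,
        hassoc _ _ _ _ hy _ hx _ hz, hassoc _ _ _ _ hRx _ hz _ hRy,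
        hassoc _ _ _ _ hz _ hRx _ hRy, hassoc _ _ _ _ hx _ hz _ hRy]
      try simp only [show ((1 : ZMod 2) + 1) = 0 by decide, zero_add, add_zero]
      try simp only [sgn, ZMod.val_zero, ZMod.val_one, mul_zero, zero_mul, mul_one,
        one_mul, pow_zero, pow_one, one_smul, neg_smul, neg_neg, neg_sub]
      module
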